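/- Let d ≥ 1, let A ⊂ ℝ^d be compact and Riemann measurable with |A| > 0, let X_1, X_2, … be i.i.d. uniform random points in A, and let B ⊆ A. Fix k ∈ ℕ. For each t > 0 let Z_t be an ℕ-valued random variable, Poisson distributed with mean t and independent of the sequence (X_1, X_2, …), and set R'_{t,k} := R_{Z_t,k} (with R_{0,k} := +∞). Let a, b ∈ (0,∞), c ∈ ℝ, and let F be a continuous cumulative distribution function. If lim_{t→∞} P[ a·t·(R'_{t,k})^d − b·log t − c·log log t ≤ γ ] = F(γ) for every γ ∈ ℝ, then lim_{n→∞} P[ a·n·R_{n,k}^d − b·log n − c·log log n ≤ γ ] = F(γ) for every γ ∈ ℝ. -/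

import Mathlib

open MeasureTheory Metric Filter Topology

noncomputable section

/-- Every point of `B` has at least `k` of the points `X 0, …, X (n-1)` within distance `r`. -/
def covers {d : ℕ} (X : ℕ → EuclideanSpace ℝ (Fin d)) (n k : ℕ)
    (B : Set (EuclideanSpace ℝ (Fin d))) (r : ℝ) : Prop :=
  ∀ x ∈ B, k ≤ {i : ℕ | i < n ∧ X i ∈ closedBall x r}.ncard

/-- The `k`-coverage threshold `R_{n,k}`, as an extended real (`+∞` if no radius works). -/
def covThresh {d : ℕ} (X : ℕ → EuclideanSpace ℝ (Fin d)) (n k : ℕ)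
    (B : Set (EuclideanSpace ℝ (Fin d))) : EReal :=
  sInf {ρ : EReal | ∃ r : ℝ, ρ = (r : EReal) ∧ 0 < r ∧ covers X n k B r}

open Real ProbabilityTheory
open scoped NNReal Nat

/-!
The coverage threshold `R_{n,k}` is nonincreasing in `n`. Put `ε n = n^(-1/3)`,
`t⁺ = n (1 + ε n)` and `t⁻ = n / (1 + ε n)`. By Chebyshev's inequality a Poisson variable of mean
`t⁺` (resp. `t⁻`) is `≥ n` (resp. `≤ n`) with probability tending to one, because its standard
deviation `√t` is `o(n ε n)`; on that event `R'_{t⁺,k} ≤ R_{n,k}` (resp. `R_{n,k} ≤ R'_{t⁻,k}`).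
Since `ε n log n → 0`, replacing `n` by `t⁺` or `t⁻` in the normalization
`a t r^d - b log t - c log log t` moves the threshold on `r^d` by `o(1)` in the `γ` scale, so
`P[a n R_{n,k}^d - … ≤ γ]` lies between `F (γ - δ) - o(1)` and `F (γ + δ) + o(1)` for every
`δ > 0`, and continuity of `F` concludes.
-/

theorem covers.mono {d : ℕ} {X : ℕ → EuclideanSpace ℝ (Fin d)} {n m k : ℕ}
    {B : Set (EuclideanSpace ℝ (Fin d))} {r : ℝ} (h : covers X n k B r) (hnm : n ≤ m) :
    covers X m k B r := fun x hx =>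
  (h x hx).trans <| Set.ncard_le_ncard (fun _ hi => ⟨hi.1.trans_le hnm, hi.2⟩)
    ((Set.finite_Iio m).subset fun _ hi => hi.1)

theorem covThresh_nonneg {d : ℕ} (X : ℕ → EuclideanSpace ℝ (Fin d)) (n k : ℕ)
    (B : Set (EuclideanSpace ℝ (Fin d))) : 0 ≤ covThresh X n k B :=
  le_sInf fun _ ⟨_, hρ, hr, _⟩ => hρ ▸ EReal.coe_nonneg.2 hr.le

theorem covThresh_antitone {d : ℕ} (X : ℕ → EuclideanSpace ℝ (Fin d)) (k : ℕ)
    (B : Set (EuclideanSpace ℝ (Fin d))) : Antitone fun n => covThresh X n k B :=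
  fun _ _ hnm => sInf_le_sInf fun _ ⟨r, hρ, hr, hc⟩ => ⟨r, hρ, hr, hc.mono hnm⟩

theorem EReal.coe_mul_sub_sub_le_coe_iff {s : ℝ} (hs : 0 < s) (y : EReal) (q q' γ : ℝ) :
    (s : EReal) * y - q - q' ≤ γ ↔ y ≤ ((γ + q + q') / s : ℝ) := by
  rw [EReal.sub_le_iff_le_add (by simp) (by simp), EReal.sub_le_iff_le_add (by simp) (by simp),
    EReal.coe_div, EReal.le_div_iff_mul_le (by exact_mod_cast hs) (EReal.coe_ne_top s), mul_comm,
    add_right_comm]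
  norm_cast

theorem tendsto_of_sandwich {ι : Type*} {l : Filter ι} {p : ι → ℝ} {F : ℝ → ℝ} {γ : ℝ}
    (hF : ContinuousAt F γ)
    (hup : ∀ ε > 0, ∃ u : ι → ℝ, Tendsto u l (𝓝 (F (γ + ε))) ∧ p ≤ᶠ[l] u)
    (hlo : ∀ ε > 0, ∃ u : ι → ℝ, Tendsto u l (𝓝 (F (γ - ε))) ∧ u ≤ᶠ[l] p) :
    Tendsto p l (𝓝 (F γ)) := by
  have hshift (σ : ℝ) : Tendsto (fun ε => F (γ + σ * ε)) (𝓝[>] 0) (𝓝 (F γ)) := by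
    refine hF.tendsto.comp (tendsto_nhdsWithin_of_tendsto_nhds ?_)
    exact (by fun_prop : Continuous fun ε : ℝ => γ + σ * ε).tendsto' 0 γ (by simp)
  refine tendsto_order.2 ⟨fun x hx => ?_, fun x hx => ?_⟩
  · obtain ⟨ε, hxε, hε⟩ :=
      (((hshift (-1)).eventually (eventually_gt_nhds hx)).and self_mem_nhdsWithin).exists
    obtain ⟨u, hu, hup⟩ := hlo ε hε
    simp only [neg_mul, one_mul, ← sub_eq_add_neg] at hxε
    filter_upwards [hu.eventually (eventually_gt_nhds hxε), hup] with i h1 h2 using h1.trans_le h2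
  · obtain ⟨ε, hxε, hε⟩ :=
      (((hshift 1).eventually (eventually_lt_nhds hx)).and self_mem_nhdsWithin).exists
    obtain ⟨u, hu, hup⟩ := hup ε hε
    rw [one_mul] at hxε
    filter_upwards [hu.eventually (eventually_lt_nhds hxε), hup] with i h1 h2 using h2.trans_lt h1

theorem tendsto_measureReal_le_of_poissonized {Ω α : Type*} [MeasurableSpace Ω] [Preorder α]
    (P : Measure Ω) [IsFiniteMeasure P] {Y : ℕ → Ω → α} (hY : ∀ ω, Antitone fun n => Y n ω)
    {Z : ℝ → Ω → ℕ} {ρ : ℝ → ℝ → α} {F : ℝ → ℝ}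
    (hconv : ∀ γ, Tendsto (fun t => P.real {ω | Y (Z t ω) ω ≤ ρ t γ}) atTop (𝓝 (F γ)))
    {γ : ℝ} (hF : ContinuousAt F γ) {tup tlo : ℕ → ℝ}
    (htup : Tendsto tup atTop atTop) (htlo : Tendsto tlo atTop atTop)
    (herr_up : Tendsto (fun n : ℕ => P.real {ω | Z (tup n) ω < n}) atTop (𝓝 0))
    (herr_lo : Tendsto (fun n : ℕ => P.real {ω | n < Z (tlo n) ω}) atTop (𝓝 0))
    (hρup : ∀ ε > 0, ∀ᶠ n : ℕ in atTop, ρ n γ ≤ ρ (tup n) (γ + ε))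
    (hρlo : ∀ ε > 0, ∀ᶠ n : ℕ in atTop, ρ (tlo n) (γ - ε) ≤ ρ n γ) :
    Tendsto (fun n : ℕ => P.real {ω | Y n ω ≤ ρ n γ}) atTop (𝓝 (F γ)) := by
  refine tendsto_of_sandwich hF
    (fun ε hε => ⟨_, by simpa using ((hconv _).comp htup).add herr_up, ?_⟩)
    (fun ε hε => ⟨_, by simpa using ((hconv _).comp htlo).sub herr_lo, ?_⟩)
  · filter_upwards [hρup ε hε] with n hn
    refine (measureReal_mono fun ω hω => ?_).trans (measureReal_union_le _ _)
    by_cases hZn : n ≤ Z (tup n) ω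
    · exact Or.inl ((hY ω hZn).trans (hω.trans hn))
    · exact Or.inr (not_le.1 hZn)
  · filter_upwards [hρlo ε hε] with n hn
    rw [sub_le_iff_le_add]
    refine (measureReal_mono fun ω hω => ?_).trans (measureReal_union_le _ _)
    by_cases hZn : Z (tlo n) ω ≤ n
    · exact Or.inl ((hY ω hZn).trans (hω.trans hn))
    · exact Or.inr (not_le.1 hZn)

theorem hasSum_descFactorial_mul_pow_div_factorial (x : ℝ) (k : ℕ) :
    HasSum (fun j : ℕ => (j.descFactorial k : ℝ) * (x ^ j / j !)) (x ^ k * exp x) := by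
  rw [← hasSum_nat_add_iff' k, Finset.sum_eq_zero fun i hi => by
    simp [Nat.descFactorial_eq_zero_iff_lt.2 (Finset.mem_range.1 hi)], sub_zero, exp_eq_exp_ℝ]
  refine ((NormedSpace.expSeries_div_hasSum_exp x).mul_left (x ^ k)).congr_fun fun j => ?_
  have hfact : ((j + k)! : ℝ) = j ! * (j + k).descFactorial k := by
    exact_mod_cast
      (Nat.add_sub_cancel j k ▸ Nat.factorial_mul_descFactorial (Nat.le_add_left k j)).symm
  rw [hfact, pow_add]
  field_simp

-- `(j - r)² = j (j - 1) + (1 - 2 r) j + r²`, and the `k`-th factorial moment of `Po(r)` is `r ^ k`.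
theorem hasSum_poissonMeasure_mul_sq_sub (r : ℝ≥0) :
    HasSum (fun j : ℕ => exp (-r) * r ^ j / j ! * ((j : ℝ) - r) ^ 2) r := by
  have h := hasSum_descFactorial_mul_pow_div_factorial r
  have hsum := (((h 2).add ((h 1).mul_left (1 - 2 * (r : ℝ)))).add
    ((h 0).mul_left ((r : ℝ) ^ 2))).mul_left (exp (-r))
  rw [exp_neg, show (exp r)⁻¹ * (r ^ 2 * exp r + (1 - 2 * r) * (r ^ 1 * exp r)
      + r ^ 2 * (r ^ 0 * exp r)) = r by field_simp; ring] at hsum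
  refine hsum.congr_fun fun j => ?_
  simp only [Nat.cast_descFactorial_two, Nat.descFactorial_one, Nat.descFactorial_zero, exp_neg]
  push_cast
  ring

theorem poissonMeasure_real_le_div_sq (r : ℝ≥0) {δ : ℝ} (hδ : 0 < δ) {S : Set ℕ}
    (hS : ∀ j ∈ S, δ ≤ |(j : ℝ) - r|) :
    (poissonMeasure r).real S ≤ r / δ ^ 2 := by
  have hsum := hasSum_poissonMeasure_mul_sq_sub r
  have hint : Integrable (fun j : ℕ => ((j : ℝ) - r) ^ 2) (poissonMeasure r) :=
    integrable_poissonMeasure_iff.2 <| by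
      simpa only [norm_pow, norm_eq_abs, sq_abs] using hsum.summable
  have hmarkov := mul_meas_ge_le_integral_of_nonneg (.of_forall fun j => sq_nonneg _) hint (δ ^ 2)
  simp_rw [integral_poissonMeasure, smul_eq_mul, hsum.tsum_eq] at hmarkov
  rw [le_div_iff₀ (by positivity), mul_comm]
  refine le_trans (mul_le_mul_of_nonneg_left (measureReal_mono fun j hj => ?_) (by positivity))
    hmarkov
  simpa only [Set.mem_ofPred_eq, sq_abs] using pow_le_pow_left₀ hδ.le (hS j hj) 2

set_option linter.deprecated false in
theorem poissonPMF_toMeasure (r : ℝ≥0) : (poissonPMF r).toMeasure = poissonMeasure r :=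
  Measure.ext_of_singleton fun n => by
    rw [PMF.toMeasure_apply_singleton _ _ (measurableSet_singleton n), poissonMeasure_singleton,
      ← poissonPMFReal_ofReal_eq_poissonPMF, poissonPMFReal]

section PoissonClock

variable {Ω : Type*} [MeasurableSpace Ω] {P : Measure Ω} {Z : ℝ → Ω → ℕ}

theorem measureReal_poisson_preimage_le (hZmeas : ∀ t, Measurable (Z t))
    (hZ : ∀ t : ℝ, 0 < t → P.map (Z t) = poissonMeasure t.toNNReal) {t δ : ℝ} (ht : 0 < t)
    (hδ : 0 < δ) {S : Set ℕ} (hS : ∀ j ∈ S, δ ≤ |(j : ℝ) - t|) :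
    P.real (Z t ⁻¹' S) ≤ t / δ ^ 2 := by
  rw [← map_measureReal_apply (hZmeas t) (.of_discrete), hZ t ht]
  simpa [ht.le] using poissonMeasure_real_le_div_sq t.toNNReal hδ (by simpa [ht.le] using hS)

theorem measureReal_poisson_lt_le (hZmeas : ∀ t, Measurable (Z t))
    (hZ : ∀ t : ℝ, 0 < t → P.map (Z t) = poissonMeasure t.toNNReal) {n : ℕ} (hn : 0 < n)
    {ε : ℝ} (hε : 0 < ε) :
    P.real {ω | Z (n * (1 + ε)) ω < n} ≤ (1 + ε) / (n * ε ^ 2) := by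
  have hn' : (0 : ℝ) < n := Nat.cast_pos.2 hn
  calc P.real {ω | Z (n * (1 + ε)) ω < n}
      ≤ n * (1 + ε) / (n * ε) ^ 2 :=
        measureReal_poisson_preimage_le (t := n * (1 + ε)) (δ := n * ε) hZmeas hZ (by positivity)
          (by positivity) fun j hj => by
          have hj' : (j : ℝ) ≤ n := by exact_mod_cast (Set.mem_Iio.1 hj).le
          rw [abs_sub_comm]
          exact le_abs.2 (Or.inl (by linarith))
    _ = (1 + ε) / (n * ε ^ 2) := by field_simp

theorem measureReal_poisson_gt_le (hZmeas : ∀ t, Measurable (Z t))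
    (hZ : ∀ t : ℝ, 0 < t → P.map (Z t) = poissonMeasure t.toNNReal) {n : ℕ} (hn : 0 < n)
    {ε : ℝ} (hε : 0 < ε) :
    P.real {ω | n < Z (n / (1 + ε)) ω} ≤ (1 + ε) / (n * ε ^ 2) := by
  have hn' : (0 : ℝ) < n := Nat.cast_pos.2 hn
  calc P.real {ω | n < Z (n / (1 + ε)) ω}
      ≤ n / (1 + ε) / (n * ε / (1 + ε)) ^ 2 :=
        measureReal_poisson_preimage_le (t := n / (1 + ε)) (δ := n * ε / (1 + ε)) hZmeas hZ
          (by positivity) (by positivity) fun j hj => by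
          have hj' : (n : ℝ) ≤ j := by exact_mod_cast (Set.mem_Ioi.1 hj).le
          refine le_abs.2 (Or.inl ?_)
          rw [div_le_iff₀ (by positivity), sub_mul, div_mul_cancel₀ _ (by positivity)]
          nlinarith
    _ = (1 + ε) / (n * ε ^ 2) := by field_simp

theorem tendsto_measureReal_poisson_lt (hZmeas : ∀ t, Measurable (Z t))
    (hZ : ∀ t : ℝ, 0 < t → P.map (Z t) = poissonMeasure t.toNNReal) {ε : ℕ → ℝ}
    (hε_pos : ∀ᶠ n in atTop, 0 < ε n) (hε : Tendsto ε atTop (𝓝 0))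
    (hε_var : Tendsto (fun n : ℕ => n * ε n ^ 2) atTop atTop) :
    Tendsto (fun n : ℕ => P.real {ω | Z (n * (1 + ε n)) ω < n}) atTop (𝓝 0) :=
  squeeze_zero' (.of_forall fun _ => measureReal_nonneg)
    (by filter_upwards [hε_pos, eventually_gt_atTop 0] with n hεn hn
          using measureReal_poisson_lt_le hZmeas hZ hn hεn)
    (by simpa using (hε.const_add 1).div_atTop hε_var)

theorem tendsto_measureReal_poisson_gt (hZmeas : ∀ t, Measurable (Z t))
    (hZ : ∀ t : ℝ, 0 < t → P.map (Z t) = poissonMeasure t.toNNReal) {ε : ℕ → ℝ}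
    (hε_pos : ∀ᶠ n in atTop, 0 < ε n) (hε : Tendsto ε atTop (𝓝 0))
    (hε_var : Tendsto (fun n : ℕ => n * ε n ^ 2) atTop atTop) :
    Tendsto (fun n : ℕ => P.real {ω | n < Z (n / (1 + ε n)) ω}) atTop (𝓝 0) :=
  squeeze_zero' (.of_forall fun _ => measureReal_nonneg)
    (by filter_upwards [hε_pos, eventually_gt_atTop 0] with n hεn hn
          using measureReal_poisson_gt_le hZmeas hZ hn hεn)
    (by simpa using (hε.const_add 1).div_atTop hε_var)

end PoissonClock

/-- `a t y - b log t - c log log t ≤ γ` iff `y ≤ normalizedLevel a b c t γ`, for `a t > 0`. -/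
def normalizedLevel (a b c t γ : ℝ) : ℝ := (γ + b * log t + c * log (log t)) / (a * t)

section Normalization

variable {ι : Type*} {l : Filter ι} {v w : ι → ℝ}

theorem tendsto_log_sub_log_of_tendsto_div (hv : ∀ᶠ i in l, 0 < v i)
    (hwv : Tendsto (fun i => w i / v i) l (𝓝 1)) :
    Tendsto (fun i => log (w i) - log (v i)) l (𝓝 0) := by
  have hlog := (continuousAt_log one_ne_zero).tendsto.comp hwv
  rw [log_one] at hlog
  refine hlog.congr' ?_
  filter_upwards [hv, hwv.eventually (eventually_gt_nhds one_pos)] with i hvi hwvi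
  have hwi : w i ≠ 0 := fun h => by simp [h] at hwvi
  exact log_div hwi hvi.ne'

theorem tendsto_div_of_tendsto_sub_one_mul_log (hv : Tendsto v l atTop)
    (hvw : Tendsto (fun i => (w i / v i - 1) * log (v i)) l (𝓝 0)) :
    Tendsto (fun i => w i / v i) l (𝓝 1) := by
  have hlog := tendsto_log_atTop.comp hv
  have h := (hvw.div_atTop hlog).const_add 1
  rw [add_zero] at h
  refine h.congr' ?_
  filter_upwards [hlog.eventually_gt_atTop 0] with i hi
  rw [Function.comp_apply] at hi
  rw [Function.comp_apply, mul_div_cancel_right₀ _ hi.ne', add_sub_cancel]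

theorem tendsto_log_log_sub_log_log (hv : Tendsto v l atTop)
    (hvw : Tendsto (fun i => (w i / v i - 1) * log (v i)) l (𝓝 0)) :
    Tendsto (fun i => log (log (w i)) - log (log (v i))) l (𝓝 0) := by
  have hlog := tendsto_log_atTop.comp hv
  have hdiff := tendsto_log_sub_log_of_tendsto_div (hv.eventually_gt_atTop 0)
    (tendsto_div_of_tendsto_sub_one_mul_log hv hvw)
  refine tendsto_log_sub_log_of_tendsto_div (hlog.eventually_gt_atTop 0) ?_
  have h := (hdiff.div_atTop hlog).const_add 1
  rw [add_zero] at h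
  refine h.congr' ?_
  filter_upwards [hlog.eventually_gt_atTop 0] with i hi
  rw [Function.comp_apply] at hi
  rw [Function.comp_apply, sub_div, div_self hi.ne', add_sub_cancel]

theorem tendsto_sub_one_mul_log_log (hv : Tendsto v l atTop)
    (hvw : Tendsto (fun i => (w i / v i - 1) * log (v i)) l (𝓝 0)) :
    Tendsto (fun i => (w i / v i - 1) * log (log (v i))) l (𝓝 0) := by
  refine squeeze_zero_norm' ?_ (by simpa using hvw.norm)
  filter_upwards [(tendsto_log_atTop.comp hv).eventually_ge_atTop 1] with i hi
  simp only [Function.comp_apply] at hi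
  rw [norm_mul, norm_eq_abs, norm_eq_abs, abs_of_nonneg (log_nonneg hi),
    abs_of_nonneg (a := log (v i)) (by linarith)]
  exact mul_le_mul_of_nonneg_left (log_le_self (by linarith)) (abs_nonneg _)

theorem tendsto_div_mul_add_log_sub (b c γ : ℝ) (hv : Tendsto v l atTop)
    (hvw : Tendsto (fun i => (w i / v i - 1) * log (v i)) l (𝓝 0)) :
    Tendsto (fun i => w i / v i * (γ + b * log (v i) + c * log (log (v i)))
      - (b * log (w i) + c * log (log (w i)))) l (𝓝 γ) := by
  have hdiv := tendsto_div_of_tendsto_sub_one_mul_log hv hvw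
  have hlog := tendsto_log_sub_log_of_tendsto_div (hv.eventually_gt_atTop 0) hdiv
  have h := ((hdiv.const_mul γ).add ((hvw.sub hlog).const_mul b)).add
    (((tendsto_sub_one_mul_log_log hv hvw).sub (tendsto_log_log_sub_log_log hv hvw)).const_mul c)
  simp only [mul_one, sub_zero, mul_zero, add_zero] at h
  exact h.congr fun i => by ring

theorem eventually_normalizedLevel_le {a : ℝ} (ha : 0 < a) (b c : ℝ) {γ γ' : ℝ} (hγ : γ < γ')
    (hv : Tendsto v l atTop)
    (hvw : Tendsto (fun i => (w i / v i - 1) * log (v i)) l (𝓝 0)) :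
    ∀ᶠ i in l, normalizedLevel a b c (v i) γ ≤ normalizedLevel a b c (w i) γ' := by
  filter_upwards [(tendsto_div_mul_add_log_sub b c γ hv hvw).eventually (eventually_lt_nhds hγ),
    hv.eventually_gt_atTop 0,
    (tendsto_div_of_tendsto_sub_one_mul_log hv hvw).eventually (eventually_gt_nhds one_pos)]
    with i hlt hvi hwvi
  have hwi : 0 < w i := by simpa [div_mul_cancel₀ _ hvi.ne'] using mul_pos hwvi hvi
  have key := mul_lt_mul_of_pos_left hlt hvi
  rw [mul_sub, ← mul_assoc, mul_div_cancel₀ _ hvi.ne'] at key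
  rw [normalizedLevel, normalizedLevel, div_le_div_iff₀ (by positivity) (by positivity)]
  nlinarith

end Normalization

section Window

variable {ε : ℕ → ℝ}

theorem tendsto_rpow_neg_mul_log {θ : ℝ} (hθ : 0 < θ) :
    Tendsto (fun n : ℕ => (n : ℝ) ^ (-θ) * log n) atTop (𝓝 0) := by
  refine ((isLittleO_log_rpow_atTop hθ).tendsto_div_nhds_zero.comp
    tendsto_natCast_atTop_atTop).congr fun n => ?_
  rw [Function.comp_apply, rpow_neg (Nat.cast_nonneg n), div_eq_inv_mul]

theorem tendsto_mul_rpow_neg_sq {θ : ℝ} (hθ : θ < 1 / 2) :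
    Tendsto (fun n : ℕ => (n : ℝ) * ((n : ℝ) ^ (-θ)) ^ 2) atTop atTop := by
  refine ((tendsto_rpow_atTop (by linarith : 0 < 1 - 2 * θ)).comp
    tendsto_natCast_atTop_atTop).congr fun n => ?_
  rw [Function.comp_apply, ← rpow_natCast, ← rpow_mul (Nat.cast_nonneg n),
    ← rpow_one_add' (Nat.cast_nonneg n) (by push_cast; linarith)]
  push_cast
  ring_nf

theorem tendsto_zero_of_tendsto_mul_log (hε : Tendsto (fun n : ℕ => ε n * log n) atTop (𝓝 0)) :
    Tendsto ε atTop (𝓝 0) := by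
  have hlog := tendsto_log_atTop.comp (tendsto_natCast_atTop_atTop (R := ℝ))
  refine (hε.div_atTop hlog).congr' ?_
  filter_upwards [hlog.eventually_gt_atTop 0] with n hn
  exact mul_div_cancel_right₀ _ hn.ne'

theorem tendsto_mul_one_add_div_sub_one_mul_log
    (hε : Tendsto (fun n : ℕ => ε n * log n) atTop (𝓝 0)) :
    Tendsto (fun n : ℕ => ((n : ℝ) * (1 + ε n) / n - 1) * log n) atTop (𝓝 0) := by
  refine hε.congr' ?_
  filter_upwards [eventually_gt_atTop 0] with n hn
  rw [mul_div_cancel_left₀ _ (Nat.cast_pos.2 hn).ne', add_sub_cancel_left]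

theorem tendsto_div_div_one_add_sub_one_mul_log
    (hε : Tendsto (fun n : ℕ => ε n * log n) atTop (𝓝 0)) :
    Tendsto (fun n : ℕ => ((n : ℝ) / (n / (1 + ε n)) - 1) * log (n / (1 + ε n))) atTop (𝓝 0) := by
  have hε0 := tendsto_zero_of_tendsto_mul_log hε
  have h1ε : Tendsto (fun n => 1 + ε n) atTop (𝓝 1) := by simpa using hε0.const_add 1
  have h := hε.sub (hε0.mul ((continuousAt_log one_ne_zero).tendsto.comp h1ε))
  rw [log_one, mul_zero, sub_zero] at h
  refine h.congr' ?_
  filter_upwards [eventually_gt_atTop 0, h1ε.eventually (eventually_gt_nhds one_pos)]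
    with n hn h1
  rw [Function.comp_apply, div_div_cancel₀ (Nat.cast_pos.2 hn).ne', add_sub_cancel_left,
    log_div (Nat.cast_pos.2 hn).ne' h1.ne', mul_sub]

end Window

theorem tendsto_measureReal_le_normalizedLevel {Ω : Type*} [MeasurableSpace Ω] (P : Measure Ω)
    [IsFiniteMeasure P] {Y : ℕ → Ω → EReal} (hY : ∀ ω, Antitone fun n => Y n ω)
    {Z : ℝ → Ω → ℕ} (hZmeas : ∀ t, Measurable (Z t))
    (hZ : ∀ t : ℝ, 0 < t → P.map (Z t) = poissonMeasure t.toNNReal) {a : ℝ} (ha : 0 < a)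
    (b c : ℝ) {F : ℝ → ℝ} (hF : Continuous F)
    (hconv : ∀ γ, Tendsto (fun t => P.real {ω | Y (Z t ω) ω ≤ normalizedLevel a b c t γ})
      atTop (𝓝 (F γ)))
    (γ : ℝ) :
    Tendsto (fun n : ℕ => P.real {ω | Y n ω ≤ normalizedLevel a b c n γ}) atTop (𝓝 (F γ)) := by
  -- The window must dominate the Poisson fluctuations (`n ε² → ∞`) but stay invisible to the
  -- normalization (`ε log n → 0`).
  set ε : ℕ → ℝ := fun n => (n : ℝ) ^ (-(1 / 3 : ℝ))
  have hε_pos : ∀ᶠ n in atTop, 0 < ε n :=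
    (eventually_gt_atTop 0).mono fun n hn => rpow_pos_of_pos (Nat.cast_pos.2 hn) _
  have hε_log : Tendsto (fun n : ℕ => ε n * log n) atTop (𝓝 0) :=
    tendsto_rpow_neg_mul_log (by norm_num)
  have hε_var : Tendsto (fun n : ℕ => n * ε n ^ 2) atTop atTop :=
    tendsto_mul_rpow_neg_sq (by norm_num)
  have hε := tendsto_zero_of_tendsto_mul_log hε_log
  have h1ε : Tendsto (fun n => 1 + ε n) atTop (𝓝 1) := by simpa using hε.const_add 1
  have htlo : Tendsto (fun n : ℕ => n / (1 + ε n)) atTop atTop := by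
    simpa only [div_eq_mul_inv] using
      tendsto_natCast_atTop_atTop.atTop_mul_pos one_pos (by simpa using h1ε.inv₀ one_ne_zero)
  refine tendsto_measureReal_le_of_poissonized P hY (ρ := fun t γ => normalizedLevel a b c t γ)
    hconv hF.continuousAt (tendsto_natCast_atTop_atTop.atTop_mul_pos one_pos h1ε) htlo
    (tendsto_measureReal_poisson_lt hZmeas hZ hε_pos hε hε_var)
    (tendsto_measureReal_poisson_gt hZmeas hZ hε_pos hε hε_var)
    (fun δ hδ => ?_) (fun δ hδ => ?_)
  · exact (eventually_normalizedLevel_le ha b c (lt_add_of_pos_right γ hδ)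
      tendsto_natCast_atTop_atTop (tendsto_mul_one_add_div_sub_one_mul_log hε_log)).mono
      fun n hn => EReal.coe_le_coe_iff.2 hn
  · exact (eventually_normalizedLevel_le ha b c (sub_lt_self γ hδ) htlo
      (tendsto_div_div_one_add_sub_one_mul_log hε_log)).mono fun n hn => EReal.coe_le_coe_iff.2 hn

theorem dePoissonization_general
    {d : ℕ}
    {Ω : Type*} [MeasurableSpace Ω] (P : Measure Ω) [IsProbabilityMeasure P]
    (B : Set (EuclideanSpace ℝ (Fin d)))
    (X : ℕ → Ω → EuclideanSpace ℝ (Fin d))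
    (Z : ℝ → Ω → ℕ)
    (hZmeas : ∀ t, Measurable (Z t))
    (hZpoisson : ∀ t : ℝ, 0 < t →
      Measure.map (Z t) P = (ProbabilityTheory.poissonPMF t.toNNReal).toMeasure)
    (k : ℕ)
    (a b c : ℝ) (ha : 0 < a)
    (F : ℝ → ℝ) (hFcont : Continuous F)
    (hconv : ∀ γ : ℝ,
      Tendsto
        (fun t : ℝ =>
          (P {ω : Ω |
            ((a * t : ℝ) : EReal) * (covThresh (fun i => X i ω) (Z t ω) k B) ^ d
              - ((b * Real.log t : ℝ) : EReal)
              - ((c * Real.log (Real.log t) : ℝ) : EReal)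
              ≤ ((γ : ℝ) : EReal)}).toReal)
        atTop (𝓝 (F γ))) :
    ∀ γ : ℝ,
      Tendsto
        (fun n : ℕ =>
          (P {ω : Ω |
            ((a * (n : ℝ) : ℝ) : EReal) * (covThresh (fun i => X i ω) n k B) ^ d
              - ((b * Real.log (n : ℝ) : ℝ) : EReal)
              - ((c * Real.log (Real.log (n : ℝ)) : ℝ) : EReal)
              ≤ ((γ : ℝ) : EReal)}).toReal)
        atTop (𝓝 (F γ)) := by
  have hZ (t : ℝ) (ht : 0 < t) : P.map (Z t) = poissonMeasure t.toNNReal := by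
    rw [hZpoisson t ht, poissonPMF_toMeasure]
  have hevent {t : ℝ} (ht : 0 < t) (y : EReal) (γ : ℝ) :
      ((a * t : ℝ) : EReal) * y - ((b * log t : ℝ) : EReal) - ((c * log (log t) : ℝ) : EReal)
        ≤ ((γ : ℝ) : EReal) ↔ y ≤ normalizedLevel a b c t γ :=
    EReal.coe_mul_sub_sub_le_coe_iff (mul_pos ha ht) y _ _ γ
  intro γ
  refine (tendsto_measureReal_le_normalizedLevel P
    (Y := fun n ω => covThresh (fun i => X i ω) n k B ^ d)
    (fun ω _ _ hnm => pow_le_pow_left₀ (covThresh_nonneg _ _ _ _) (covThresh_antitone _ _ _ hnm) d)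
    hZmeas hZ ha b c hFcont (fun γ => (hconv γ).congr' ?_) γ).congr' ?_
  · filter_upwards [eventually_gt_atTop 0] with t ht
    simp_rw [hevent ht]
    rfl
  · filter_upwards [eventually_gt_atTop 0] with n hn
    simp_rw [hevent (Nat.cast_pos.2 hn)]
    rfl

theorem dePoissonization
    {d : ℕ} (hd : 1 ≤ d)
    {Ω : Type*} [MeasurableSpace Ω] (P : Measure Ω) [IsProbabilityMeasure P]
    (A B : Set (EuclideanSpace ℝ (Fin d)))
    (hAcompact : IsCompact A) (hARiemann : volume (frontier A) = 0) (hApos : 0 < volume A)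
    (hBA : B ⊆ A)
    (X : ℕ → Ω → EuclideanSpace ℝ (Fin d))
    (hXmeas : ∀ i, Measurable (X i))
    (hXunif : ∀ i, Measure.map (X i) P = (volume A)⁻¹ • volume.restrict A)
    (hXindep : ProbabilityTheory.iIndepFun X P)
    (Z : ℝ → Ω → ℕ)
    (hZmeas : ∀ t, Measurable (Z t))
    (hZpoisson : ∀ t : ℝ, 0 < t →
      Measure.map (Z t) P = (ProbabilityTheory.poissonPMF t.toNNReal).toMeasure)
    (hZindep : ∀ t : ℝ, 0 < t →
      ProbabilityTheory.IndepFun (Z t) (fun ω => fun i => X i ω) P)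
    (k : ℕ) (hk : 1 ≤ k)
    (a b c : ℝ) (ha : 0 < a) (hb : 0 < b)
    (F : ℝ → ℝ) (hFcont : Continuous F) (hFmono : Monotone F)
    (hF0 : Tendsto F atBot (𝓝 0)) (hF1 : Tendsto F atTop (𝓝 1))
    (hconv : ∀ γ : ℝ,
      Tendsto
        (fun t : ℝ =>
          (P {ω : Ω |
            ((a * t : ℝ) : EReal) * (covThresh (fun i => X i ω) (Z t ω) k B) ^ d
              - ((b * Real.log t : ℝ) : EReal)
              - ((c * Real.log (Real.log t) : ℝ) : EReal)
              ≤ ((γ : ℝ) : EReal)}).toReal)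
        atTop (𝓝 (F γ))) :
    ∀ γ : ℝ,
      Tendsto
        (fun n : ℕ =>
          (P {ω : Ω |
            ((a * (n : ℝ) : ℝ) : EReal) * (covThresh (fun i => X i ω) n k B) ^ d
              - ((b * Real.log (n : ℝ) : ℝ) : EReal)
              - ((c * Real.log (Real.log (n : ℝ)) : ℝ) : EReal)
              ≤ ((γ : ℝ) : EReal)}).toReal)
        atTop (𝓝 (F γ)) :=
  dePoissonization_general P B X Z hZmeas hZpoisson k a b c ha F hFcont hconv
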